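/- Let Y_0, Y_1, …, Y_k be k+1 independent and identically distributed real-valued random variables on a common probability space, and let 1 ≤ r ≤ k be an integer. For each index i ∈ {0, …, k}, let Q_i denote the r-th order statistic (r-th smallest value) of the k variables {Y_j : j ≠ i}. Then the probability Pr[Y_i > Q_i] is the same for all indices i, and consequently Pr[Y_0 > Q_0] ≤ (k + 1 − r)/(k + 1). -/

import Mathlib

/-!
`Q i < Y i` holds exactly when at least `r` of the other values lie strictly below `Y i`, i.e. when
the strict rank of `Y i` in the sample is at least `r`. Since an i.i.d. vector is exchangeable,
swapping coordinates `i` and `i'` shows that these events have the same probability. Pointwise, at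
most `k + 1 - r` indices can have strict rank `≥ r`, so the `k + 1` equal probabilities sum to at
most `k + 1 - r`.
-/

open MeasureTheory ProbabilityTheory Finset
open scoped ENNReal

/-- The `r`-th smallest value (1-indexed) of a list of reals, counted with
multiplicity. -/
noncomputable def rthSmallest (r : ℕ) (l : List ℝ) : ℝ :=
  (l.insertionSort (· ≤ ·)).getD (r - 1) 0

theorem List.Pairwise.getElem_lt_iff_lt_countP {α : Type*} [LinearOrder α] {s : List α}
    (hs : s.Pairwise (· ≤ ·)) {m : ℕ} (hm : m < s.length) (a : α) :
    s[m] < a ↔ m < s.countP (· < a) := by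
  induction s generalizing m with
  | nil => simp at hm
  | cons x t ih =>
    obtain ⟨hxt, ht⟩ := List.pairwise_cons.mp hs
    by_cases hx : x < a
    · cases m with
      | zero => simp [hx]
      | succ n => simpa [hx] using ih ht (by simpa using hm)
    · have hge : ∀ y ∈ x :: t, ¬ y < a := by
        simp only [List.mem_cons, forall_eq_or_imp]
        exact ⟨hx, fun y hy => not_lt.2 ((not_lt.1 hx).trans (hxt y hy))⟩
      have hzero : (x :: t).countP (· < a) = 0 :=
        List.countP_eq_zero.mpr fun y hy => by simpa using hge y hy
      simp [hzero, hge _ (List.getElem_mem hm)]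

theorem rthSmallest_lt_iff {r : ℕ} (hr : 1 ≤ r) {l : List ℝ} (hrl : r ≤ l.length) (a : ℝ) :
    rthSmallest r l < a ↔ r ≤ l.countP (· < a) := by
  have hperm := List.perm_insertionSort (· ≤ ·) l
  have hm : r - 1 < (l.insertionSort (· ≤ ·)).length := by rw [hperm.length_eq]; omega
  rw [rthSmallest, List.getD_eq_getElem _ _ hm,
    (List.pairwise_insertionSort _ l).getElem_lt_iff_lt_countP hm, hperm.countP_eq]
  omega

theorem List.countP_ofFn {α : Type*} {n : ℕ} (x : Fin n → α) (p : α → Prop) [DecidablePred p] :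
    (List.ofFn x).countP (fun a => decide (p a)) = #{j | p (x j)} := by
  rw [← Multiset.coe_countP, ← Fin.univ_val_map, Multiset.countP_map]
  rfl

def strictRank {ι α : Type*} [Fintype ι] [LinearOrder α] (x : ι → α) (i : ι) : ℕ :=
  #{j | x j < x i}

section StrictRank

variable {ι α : Type*} [Fintype ι] [LinearOrder α]

theorem countP_eraseIdx_ofFn_lt {n : ℕ} (x : Fin n → α) (i : Fin n) :
    ((List.ofFn x).eraseIdx i).countP (· < x i) = strictRank x i := by
  have hperm := List.getElem_cons_eraseIdx_perm (l := List.ofFn x) (n := i) (by simp)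
  have hcount := List.countP_ofFn x (· < x i)
  rw [← hperm.countP_eq, List.countP_cons] at hcount
  simpa [strictRank] using hcount

theorem strictRank_comp_equiv {ι' : Type*} [Fintype ι'] (x : ι → α) (σ : ι' ≃ ι) (i : ι') :
    strictRank (x ∘ σ) i = strictRank x (σ i) :=
  card_equiv σ (by simp)

/-- The coordinates strictly below the smallest `x i` with `r ≤ strictRank x i` are at least `r`
in number and all outside that set. -/
theorem card_le_strictRank_le (x : ι → α) (r : ℕ) :
    #{i | r ≤ strictRank x i} ≤ Fintype.card ι - r := by
  classical
  set S : Finset ι := {i | r ≤ strictRank x i}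
  rcases S.eq_empty_or_nonempty with hS | hS
  · simp [hS]
  obtain ⟨i₀, hi₀, hmin⟩ := S.exists_min_image x hS
  have hdisj : Disjoint S ({j | x j < x i₀} : Finset ι) :=
    disjoint_filter.2 fun j _ hj hlt => (hmin j (mem_filter.2 ⟨mem_univ j, hj⟩)).not_gt hlt
  have hcard := card_union_of_disjoint hdisj ▸ card_le_univ (S ∪ ({j | x j < x i₀} : Finset ι))
  have hr : r ≤ strictRank x i₀ := (mem_filter.1 hi₀).2
  rw [strictRank] at hr
  omega

theorem measurable_strictRank [MeasurableSpace α] [TopologicalSpace α] [OpensMeasurableSpace α]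
    [OrderClosedTopology α] [SecondCountableTopology α] (i : ι) :
    Measurable fun x : ι → α => strictRank x i := by
  simp_rw [strictRank, card_filter]
  exact measurable_sum _ fun j _ => Measurable.ite
    (measurableSet_lt (measurable_pi_apply j) (measurable_pi_apply i)) measurable_const
    measurable_const

end StrictRank

theorem rthSmallest_eraseIdx_ofFn_lt_iff {k r : ℕ} (hr : 1 ≤ r) (hrk : r ≤ k)
    (x : Fin (k + 1) → ℝ) (i : Fin (k + 1)) :
    rthSmallest r ((List.ofFn x).eraseIdx i) < x i ↔ r ≤ strictRank x i := by
  have hlen : r ≤ ((List.ofFn x).eraseIdx i).length := by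
    rw [List.length_eraseIdx_of_lt (by simp [i.is_lt])]
    simpa using hrk
  rw [rthSmallest_lt_iff hr hlen, countP_eraseIdx_ofFn_lt]

open Classical in
theorem MeasureTheory.sum_measure_le_of_forall_card_le {Ω ι : Type*} [MeasurableSpace Ω]
    (μ : Measure Ω) {s : Finset ι} {A : ι → Set Ω} (hA : ∀ i ∈ s, MeasurableSet (A i)) {m : ℕ}
    (h : ∀ ω, #{i ∈ s | ω ∈ A i} ≤ m) :
    ∑ i ∈ s, μ (A i) ≤ m * μ Set.univ :=
  calc ∑ i ∈ s, μ (A i) = ∫⁻ ω, ∑ i ∈ s, (A i).indicator 1 ω ∂μ := by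
        rw [lintegral_finsetSum _ fun i hi => measurable_one.indicator (hA i hi)]
        exact sum_congr rfl fun i hi => (lintegral_indicator_one (hA i hi)).symm
    _ ≤ ∫⁻ _, (m : ℝ≥0∞) ∂μ := lintegral_mono fun ω => by
        simpa [Set.indicator_apply, sum_boole] using h ω
    _ = m * μ Set.univ := lintegral_const _

section Exchangeable

variable {Ω ι α : Type*} [MeasurableSpace Ω] {μ : Measure Ω}
  [Fintype ι] [MeasurableSpace α] {Y : ι → Ω → α}

theorem ProbabilityTheory.iIndepFun.map_comp_perm_eq (hY : ∀ i, AEMeasurable (Y i) μ)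
    (hindep : iIndepFun Y μ) (hident : ∀ i j, IdentDistrib (Y i) (Y j) μ μ)
    (σ : Equiv.Perm ι) :
    μ.map (fun ω i => Y (σ i) ω) = μ.map (fun ω i => Y i ω) := by
  rw [(hindep.precomp σ.injective).map_fun_eq_pi_map fun i => hY (σ i),
    hindep.map_fun_eq_pi_map hY]
  exact congrArg Measure.pi (funext fun i => (hident (σ i) i).map_eq)

theorem ProbabilityTheory.iIndepFun.measure_setOf_le_strictRank_eq [LinearOrder α]
    [TopologicalSpace α] [OpensMeasurableSpace α] [OrderClosedTopology α]
    [SecondCountableTopology α] (hY : ∀ i, Measurable (Y i)) (hindep : iIndepFun Y μ)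
    (hident : ∀ i j, IdentDistrib (Y i) (Y j) μ μ) (r : ℕ) (i i' : ι) :
    μ {ω | r ≤ strictRank (fun j => Y j ω) i} = μ {ω | r ≤ strictRank (fun j => Y j ω) i'} := by
  classical
  set σ := Equiv.swap i' i
  have hC : MeasurableSet {x : ι → α | r ≤ strictRank x i'} :=
    measurableSet_le measurable_const (measurable_strictRank i')
  have hswap : {ω | r ≤ strictRank (fun j => Y j ω) i}
      = (fun ω j => Y (σ j) ω) ⁻¹' {x | r ≤ strictRank x i'} := by
    ext ω
    simp only [Set.mem_ofPred_eq, Set.mem_preimage]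
    rw [← Function.comp_def (fun j => Y j ω) σ, strictRank_comp_equiv, Equiv.swap_apply_left]
  rw [hswap, ← Measure.map_apply (measurable_pi_lambda _ fun j => hY (σ j)) hC,
    hindep.map_comp_perm_eq (fun j => (hY j).aemeasurable) hident,
    Measure.map_apply (measurable_pi_lambda _ hY) hC]
  rfl

end Exchangeable

/-- **Symmetry bound at the core of split conformal prediction.**
Let `Y₀, …, Y_k` be `k+1` i.i.d. real random variables and `1 ≤ r ≤ k`.  For
each `i`, let `Q i` be the `r`-th order statistic of the `k` variables
`{Y j : j ≠ i}`.  Then `Pr[Y i > Q i]` is the same for all `i`, and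
consequently `Pr[Y₀ > Q₀] ≤ (k + 1 - r)/(k + 1)`. -/
theorem leaveOneOut_exceedance_symmetry_bound
    {Ω : Type*} [MeasurableSpace Ω] (μ : Measure Ω) [IsProbabilityMeasure μ]
    (k : ℕ) (Y : Fin (k + 1) → Ω → ℝ)
    (hmeas : ∀ i, Measurable (Y i))
    (hindep : iIndepFun Y μ)
    (hident : ∀ i j : Fin (k + 1), IdentDistrib (Y i) (Y j) μ μ)
    (r : ℕ) (hr1 : 1 ≤ r) (hrk : r ≤ k)
    (Q : Fin (k + 1) → Ω → ℝ)
    (hQ : ∀ i ω, Q i ω = rthSmallest r ((List.ofFn fun j => Y j ω).eraseIdx i)) :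
    (∀ i i' : Fin (k + 1),
        μ {ω | Q i ω < Y i ω} = μ {ω | Q i' ω < Y i' ω}) ∧
      μ {ω | Q 0 ω < Y 0 ω} ≤
        ENNReal.ofReal (((k : ℝ) + 1 - r) / ((k : ℝ) + 1)) := by
  have hevent : ∀ i, {ω | Q i ω < Y i ω} = {ω | r ≤ strictRank (fun j => Y j ω) i} := by
    intro i
    ext ω
    simp only [Set.mem_ofPred_eq, hQ, rthSmallest_eraseIdx_ofFn_lt_iff hr1 hrk]
  simp_rw [hevent]
  have hsym := hindep.measure_setOf_le_strictRank_eq hmeas hident r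
  refine ⟨hsym, ?_⟩
  have hsum := sum_measure_le_of_forall_card_le μ (s := univ) (m := k + 1 - r)
    (A := fun i => {ω | r ≤ strictRank (fun j => Y j ω) i})
    (fun i _ => measurableSet_le measurable_const
      ((measurable_strictRank i).comp (measurable_pi_lambda _ hmeas)))
    (fun ω => by simpa using card_le_strictRank_le (fun j => Y j ω) r)
  rw [sum_congr rfl fun i _ => hsym i 0, sum_const, card_univ, Fintype.card_fin, nsmul_eq_mul,
    measure_univ, mul_one] at hsum
  rw [ENNReal.ofReal_div_of_pos (by positivity),
    ENNReal.le_div_iff_mul_le (Or.inl (ENNReal.ofReal_pos.2 (by positivity)).ne')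
      (Or.inl ENNReal.ofReal_ne_top), mul_comm]
  convert hsum using 1
  · norm_cast
  · rw [← ENNReal.ofReal_natCast, Nat.cast_sub (by omega)]
    push_cast
    ring_nf
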